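/- arXiv:1811.06283 — 4 statements merged into one kernel-verified Lean document; each statement's English description precedes it below -/
import Mathlib

section
/- Let H = ℝ/ℤ and let R_ω be the rotation by an irrational ω. Suppose V₀, V₁ ⊆ ℝ/ℤ are closed sets with cl(int(V₀)) = V₀, cl(int(V₁)) = V₁, int(V₀) ∩ int(V₁) = ∅, and Leb(V₀ ∩ V₁) > 0. Let T ⊆ ℝ/ℤ be a dense subgroup and G ⊆ ℝ/ℤ a residual (comeagre) set. Then there exists an infinite set I ⊆ T such that for every function a : I → {0,1} there is h ∈ G with t + h ∈ int(V_{a(t)}) for all t ∈ I. -/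
open MeasureTheory Metric Set Filter Topology
open scoped ENNReal

namespace Stmt4Aux


/-- points of density 1 -/
def densityPts (D : Set ℝ) : Set ℝ :=
  {x | Tendsto (fun r => volume (D ∩ closedBall x r) / volume (closedBall x r)) (𝓝[>] 0) (𝓝 1)}

lemma exists_Dstar {D : Set ℝ} (hD : MeasurableSet D) :
    ∃ Dstar : Set ℝ, Dstar ⊆ D ∧ MeasurableSet Dstar ∧ volume (D \ Dstar) = 0 ∧
      Dstar ⊆ densityPts D := by
  have hae := Besicovitch.ae_tendsto_measure_inter_div_of_measurableSet (volume : Measure ℝ) hD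
  set B := {x : ℝ | ¬ Tendsto (fun r => volume (D ∩ closedBall x r) / volume (closedBall x r))
      (𝓝[>] 0) (𝓝 (D.indicator 1 x))} with hB
  have hB0 : volume B = 0 := hae
  refine ⟨D \ toMeasurable volume B, diff_subset, hD.diff (measurableSet_toMeasurable _ _), ?_, ?_⟩
  · have : D \ (D \ toMeasurable volume B) ⊆ toMeasurable volume B := by
      intro x hx
      simp only [mem_diff, not_and, not_not] at hx
      exact hx.2 hx.1
    exact measure_mono_null this (by rw [measure_toMeasurable]; exact hB0)
  · intro x hx
    obtain ⟨hxD, hxB⟩ := hx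
    have : x ∉ B := fun h => hxB (subset_toMeasurable _ _ h)
    simp only [hB, mem_setOf_eq, not_not] at this
    have hind : D.indicator (1 : ℝ → ℝ≥0∞) x = 1 := by
      rw [Set.indicator_of_mem hxD]; rfl
    rw [hind] at this
    exact this

lemma density_bound {D : Set ℝ} {y ε : ℝ} (hy : y ∈ densityPts D) (hε : 0 < ε) (hε1 : ε < 1) :
    ∃ ρ₀ > 0, ∀ ρ : ℝ, 0 < ρ → ρ ≤ ρ₀ →
      ENNReal.ofReal ((1 - ε) * (2 * ρ)) ≤ volume (D ∩ closedBall y ρ) := by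
  have h1 : ENNReal.ofReal (1 - ε) < 1 := by
    rw [ENNReal.ofReal_lt_one]; linarith
  have hev : ∀ᶠ ρ in 𝓝[>] (0:ℝ),
      ENNReal.ofReal (1 - ε) < volume (D ∩ closedBall y ρ) / volume (closedBall y ρ) :=
    hy (Ioi_mem_nhds h1)
  rw [eventually_iff, mem_nhdsGT_iff_exists_Ioc_subset] at hev
  obtain ⟨δ, hδ, hδ'⟩ := hev
  refine ⟨δ, hδ, fun ρ hρ hρ' => ?_⟩
  have h2 := hδ' (show ρ ∈ Ioc (0:ℝ) δ from ⟨hρ, hρ'⟩)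
  simp only [mem_setOf_eq] at h2
  have hcb : volume (closedBall y ρ) = ENNReal.ofReal (2 * ρ) := Real.volume_closedBall y ρ
  have hne : volume (closedBall y ρ) ≠ 0 := by
    rw [hcb]; exact (ENNReal.ofReal_pos.2 (by linarith)).ne'
  have hnt : volume (closedBall y ρ) ≠ ⊤ := by rw [hcb]; exact ENNReal.ofReal_ne_top
  have := (ENNReal.lt_div_iff_mul_lt (Or.inl hne) (Or.inl hnt)).1 h2
  rw [hcb] at this
  calc ENNReal.ofReal ((1 - ε) * (2 * ρ)) = ENNReal.ofReal (1-ε) * ENNReal.ofReal (2*ρ) := by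
        rw [ENNReal.ofReal_mul (by linarith)]
    _ ≤ volume (D ∩ closedBall y ρ) := this.le

lemma key {D Dstar : Set ℝ} (hD : MeasurableSet D) (hnull : volume (D \ Dstar) = 0)
    (hdens : Dstar ⊆ densityPts D)
    {Tp : Set ℝ} (hTp : Dense Tp) (hTadd : ∀ x ∈ Tp, ∀ y ∈ Tp, x + y ∈ Tp)
    {ι : Type} [Fintype ι] [Nonempty ι]
    {τ : ℝ} (hτ : τ ∈ Tp) {z : ι → ℝ} (hz : ∀ j, z j + τ ∈ Dstar)
    {N : ι → Set ℝ} (hNo : ∀ j, IsOpen (N j))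
    (hNacc : ∀ j, ∀ ρ > 0, ∃ w ∈ N j, dist w (z j) < ρ)
    {A : Set ℝ} (hA : IsClosed A) (hA0 : volume A = 0) :
    ∃ t', t' ∈ Tp ∧ t' ∉ A ∧ ∀ j, ∃ w ∈ N j, w + t' ∈ Dstar := by
  classical
  set m := Fintype.card ι with hmdef
  have hm : 0 < m := Fintype.card_pos
  have hm' : (1:ℝ) ≤ m := by exact_mod_cast hm
  set ε : ℝ := 1/(8*m) with hεdef
  have hε : 0 < ε := by positivity
  have hε1 : ε < 1 := by
    rw [hεdef, div_lt_one (by positivity)]; nlinarith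
  set y : ι → ℝ := fun j => z j + τ with hydef
  have hyd : ∀ j, y j ∈ densityPts D := fun j => hdens (hz j)
  set M : ι → Set ℝ := fun j => (fun x => x - τ) ⁻¹' N j with hMdef
  have hMo : ∀ j, IsOpen (M j) := fun j => (hNo j).preimage (continuous_id.sub continuous_const)
  have hMacc : ∀ j, ∀ ρ > 0, ∃ w ∈ M j, dist w (y j) < ρ := by
    intro j ρ hρ
    obtain ⟨w, hw, hwd⟩ := hNacc j ρ hρ
    refine ⟨w + τ, by simpa [hMdef], ?_⟩
    simpa [hydef] using hwd
  choose ρfun hρfun using fun j => density_bound (hyd j) hε hε1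
  set r : ℝ := Finset.univ.inf' Finset.univ_nonempty ρfun with hrdef
  have hr : 0 < r := by
    rw [hrdef, Finset.lt_inf'_iff]
    exact fun j _ => (hρfun j).1
  have hrle : ∀ j, r ≤ ρfun j := fun j => Finset.inf'_le _ (Finset.mem_univ j)
  choose wit hwit hwitd using fun j => hMacc j (ε*r) (by positivity)
  set good : ι → Set ℝ := fun j => ⋃ d ∈ Dstar, (fun u => d - u) ⁻¹' (M j) with hgooddef
  have hgoodo : ∀ j, IsOpen (good j) :=
    fun j => isOpen_biUnion fun d _ => (hMo j).preimage (continuous_const.sub continuous_id)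
  have hgoodmem : ∀ j u, u ∈ good j ↔ ∃ d ∈ Dstar, d - u ∈ M j := by
    intro j u; simp [hgooddef]
  -- the per-index measure bound
  have hbound : ∀ j, volume (closedBall (0:ℝ) r \ good j) ≤ ENNReal.ofReal (r/(2*m)) := by
    intro j
    have hsub1 : closedBall (0:ℝ) r \ good j ⊆
        (fun u => wit j + u) ⁻¹' (closedBall (wit j) r \ Dstar) := by
      intro u ⟨hu1, hu2⟩
      refine ⟨?_, fun hmem => hu2 ?_⟩
      · have : dist (wit j + u) (wit j) = dist u 0 := by
          rw [Real.dist_eq, Real.dist_eq]; ring_nf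
        rw [mem_closedBall, this]
        exact hu1
      · exact (hgoodmem j u).2 ⟨wit j + u, hmem, by simpa using hwit j⟩
    have h1 : volume (closedBall (0:ℝ) r \ good j) ≤ volume (closedBall (wit j) r \ Dstar) := by
      refine le_trans (measure_mono hsub1) ?_
      rw [measure_preimage_add]
    have hsub2 : closedBall (wit j) r \ Dstar ⊆ (closedBall (wit j) r \ D) ∪ (D \ Dstar) := by
      intro u ⟨hu1, hu2⟩
      by_cases hD' : u ∈ D
      · exact Or.inr ⟨hD', hu2⟩
      · exact Or.inl ⟨hu1, hD'⟩
    have h2 : volume (closedBall (wit j) r \ Dstar) ≤ volume (closedBall (wit j) r \ D) := by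
      refine le_trans (measure_mono hsub2) ?_
      refine le_trans (measure_union_le _ _) ?_
      rw [hnull, add_zero]
    -- lower bound on the D-part
    have hsub3 : closedBall (y j) ((1-ε)*r) ⊆ closedBall (wit j) r := by
      apply closedBall_subset_closedBall'
      have := hwitd j
      have h : dist (y j) (wit j) < ε * r := by rwa [dist_comm] at this
      nlinarith
    have hvol1 : ENNReal.ofReal ((1-ε) * (2*((1-ε)*r))) ≤
        volume (closedBall (wit j) r ∩ D) := by
      have h1ε : (0:ℝ) < 1 - ε := by linarith
      refine le_trans ((hρfun j).2 ((1-ε)*r) (mul_pos h1ε hr) ?_) ?_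
      · nlinarith [hrle j]
      · refine measure_mono fun u ⟨h1', h2'⟩ => ⟨hsub3 h2', h1'⟩
    have htot : volume (closedBall (wit j) r ∩ D) + volume (closedBall (wit j) r \ D)
        = ENNReal.ofReal (2*r) := by
      rw [measure_inter_add_diff _ hD, Real.volume_closedBall]
    have h3 : volume (closedBall (wit j) r \ D) ≤
        ENNReal.ofReal (2*r) - ENNReal.ofReal ((1-ε) * (2*((1-ε)*r))) := by
      have hfin : volume (closedBall (wit j) r ∩ D) ≠ ⊤ := by
        intro h
        rw [h] at htot
        simp at htot
        exact absurd htot.symm (ENNReal.mul_ne_top (by norm_num) ENNReal.ofReal_ne_top)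
      have heq : volume (closedBall (wit j) r \ D)
          = ENNReal.ofReal (2*r) - volume (closedBall (wit j) r ∩ D) :=
        ENNReal.eq_sub_of_add_eq hfin (by rw [add_comm]; exact htot)
      rw [heq]
      exact tsub_le_tsub_left hvol1 _
    refine le_trans h1 (le_trans h2 (le_trans h3 ?_))
    have h1ε : (0:ℝ) < 1 - ε := by linarith
    rw [← ENNReal.ofReal_sub _ (by nlinarith [mul_pos h1ε (mul_pos (mul_pos two_pos h1ε) hr)])]
    apply ENNReal.ofReal_le_ofReal
    have hm0 : (m:ℝ) ≠ 0 := by positivity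
    have hkey : r/(2*(m:ℝ)) = 4*ε*r := by
      rw [hεdef]; field_simp; ring
    rw [hkey]
    nlinarith [mul_nonneg (mul_nonneg hε.le hε.le) hr.le]
  -- the avoided set, translated
  set Aτ : Set ℝ := (fun u => τ + u) ⁻¹' A with hAτdef
  have hAτc : IsClosed Aτ := hA.preimage (continuous_const.add continuous_id)
  have hAτ0 : volume Aτ = 0 := by rw [hAτdef, measure_preimage_add]; exact hA0
  set W : Set ℝ := ((⋂ j, good j) ∩ Aτᶜ) ∩ ball 0 (r+1) with hWdef
  have hWo : IsOpen W := (((isOpen_iInter_of_finite hgoodo).inter hAτc.isOpen_compl).inter isOpen_ball)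
  have hcover : closedBall (0:ℝ) r ⊆ W ∪ ((⋃ j, closedBall (0:ℝ) r \ good j) ∪ Aτ) := by
    intro u hu
    by_cases hg : ∀ j, u ∈ good j
    · by_cases ha : u ∈ Aτ
      · exact Or.inr (Or.inr ha)
      · refine Or.inl ⟨⟨mem_iInter.2 hg, ha⟩, ?_⟩
        have := mem_closedBall.1 hu
        rw [mem_ball]
        linarith
    · push_neg at hg
      obtain ⟨j, hj⟩ := hg
      exact Or.inr (Or.inl (mem_iUnion.2 ⟨j, hu, hj⟩))
  have hWne : W.Nonempty := by
    by_contra hne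
    rw [not_nonempty_iff_eq_empty] at hne
    have hle : ENNReal.ofReal (2*r) ≤ ENNReal.ofReal (r/2) := by
      calc ENNReal.ofReal (2*r) = volume (closedBall (0:ℝ) r) := (Real.volume_closedBall _ _).symm
        _ ≤ volume W + (volume (⋃ j, closedBall (0:ℝ) r \ good j) + volume Aτ) := by
            refine le_trans (measure_mono hcover) ?_
            refine le_trans (measure_union_le _ _) ?_
            exact add_le_add_right (measure_union_le _ _) _
        _ ≤ 0 + ((∑' j, volume (closedBall (0:ℝ) r \ good j)) + 0) := by
            rw [hne, measure_empty, hAτ0]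
            exact add_le_add_right (add_le_add_left (measure_iUnion_le _) _) _
        _ ≤ ∑' j : ι, ENNReal.ofReal (r/(2*m)) := by
            rw [zero_add, add_zero]
            exact ENNReal.tsum_le_tsum hbound
        _ = m * ENNReal.ofReal (r/(2*m)) := by
            rw [tsum_fintype]
            simp [Finset.sum_const, hmdef, mul_comm]
        _ = ENNReal.ofReal (m * (r/(2*m))) := by
            rw [ENNReal.ofReal_mul (by positivity)]
            congr 1
            simp [ENNReal.ofReal_natCast]
        _ = ENNReal.ofReal (r/2) := by
            congr 1
            field_simp
    rw [ENNReal.ofReal_le_ofReal_iff (by positivity)] at hle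
    linarith
  obtain ⟨u, huT, huW⟩ := hTp.exists_mem_open hWo hWne
  refine ⟨τ + u, hTadd τ hτ u huT, huW.1.2, fun j => ?_⟩
  have hu1 : u ∈ good j := mem_iInter.1 huW.1.1 j
  obtain ⟨d, hd, hdM⟩ := (hgoodmem j u).1 hu1
  refine ⟨d - u - τ, hdM, ?_⟩
  have : d - u - τ + (τ + u) = d := by ring
  rw [this]
  exact hd

structure Stage (Tp Dstar : Set ℝ) (n : ℕ) where
  tseq : Fin (n+1) → ℝ
  c : (Fin n → Bool) → ℝ
  rad : (Fin n → Bool) → ℝ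
  hts : ∀ k, tseq k ∈ Tp
  hinj : Function.Injective (fun k => ((tseq k : ℝ) : AddCircle (1:ℝ)))
  hrpos : ∀ s, 0 < rad s
  hw : ∀ s, ∃ w, w ∈ ball (c s) (rad s) ∧ w + tseq (Fin.last n) ∈ Dstar

def Extends (U : ℕ → Set ℝ) (O : Bool → Set ℝ) {Tp Dstar : Set ℝ} {n : ℕ}
    (S : Stage Tp Dstar n) (S' : Stage Tp Dstar (n+1)) : Prop :=
  (∀ k : Fin (n+1), S'.tseq k.castSucc = S.tseq k) ∧
  (∀ s' : Fin (n+1) → Bool,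
    closedBall (S'.c s') (S'.rad s') ⊆
      ball (S.c (fun k => s' k.castSucc)) (S.rad (fun k => s' k.castSucc)) ∧
    (∀ x ∈ closedBall (S'.c s') (S'.rad s'),
      x + S.tseq (Fin.last n) ∈ O (s' (Fin.last n))) ∧
    closedBall (S'.c s') (S'.rad s') ⊆ U n)

lemma step {D Dstar : Set ℝ} (hD : MeasurableSet D) (hnull : volume (D \ Dstar) = 0)
    (hdens : Dstar ⊆ densityPts D)
    {Tp : Set ℝ} (hTp : Dense Tp) (hTadd : ∀ x ∈ Tp, ∀ y ∈ Tp, x + y ∈ Tp)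
    {O : Bool → Set ℝ} (hOo : ∀ b, IsOpen (O b)) (hOcl : ∀ b, Dstar ⊆ closure (O b))
    {U : ℕ → Set ℝ} (hUo : ∀ k, IsOpen (U k)) (hUd : ∀ k, Dense (U k))
    (hfib : ∀ c : ℝ, volume {x : ℝ | (x : AddCircle (1:ℝ)) = (c : AddCircle (1:ℝ))} = 0)
    (n : ℕ) (S : Stage Tp Dstar n) :
    ∃ S' : Stage Tp Dstar (n+1), Extends U O S S' := by
  classical
  have hcont : Continuous ((↑) : ℝ → AddCircle (1:ℝ)) := QuotientAddGroup.continuous_mk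
  set τ := S.tseq (Fin.last n) with hτdef
  have hτT : τ ∈ Tp := S.hts _
  choose w hw1 hw2 using S.hw
  set F : (Fin (n+1) → Bool) → ((Fin n → Bool) × Bool) :=
    fun s' => (fun k => s' k.castSucc, s' (Fin.last n)) with hFdef
  set N : ((Fin n → Bool) × Bool) → Set ℝ :=
    fun p => (ball (S.c p.1) (S.rad p.1) ∩ {x | x + τ ∈ O p.2}) ∩ U n with hNdef
  have hNo : ∀ p, IsOpen (N p) := fun p =>
    ((isOpen_ball.inter ((hOo p.2).preimage (continuous_id.add continuous_const))).inter (hUo n))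
  have hNacc : ∀ p, ∀ ρ > 0, ∃ v ∈ N p, dist v (w p.1) < ρ := by
    rintro ⟨s, b⟩ ρ hρ
    have hQo : IsOpen ((fun x => x - τ) ⁻¹' (ball (S.c s) (S.rad s) ∩ ball (w s) ρ)) :=
      (isOpen_ball.inter isOpen_ball).preimage (continuous_id.sub continuous_const)
    have hQm : w s + τ ∈ (fun x => x - τ) ⁻¹' (ball (S.c s) (S.rad s) ∩ ball (w s) ρ) := by
      simp only [mem_preimage, add_sub_cancel_right]
      exact ⟨hw1 s, mem_ball_self hρ⟩
    obtain ⟨y, hy1, hy2⟩ := (_root_.mem_closure_iff.1 (hOcl b (hw2 s))) _ hQo hQm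
    simp only [mem_preimage, mem_inter_iff] at hy1
    set R : Set ℝ := (ball (S.c s) (S.rad s) ∩ ball (w s) ρ) ∩ {x | x + τ ∈ O b} with hRdef
    have hRo : IsOpen R :=
      (isOpen_ball.inter isOpen_ball).inter ((hOo b).preimage (continuous_id.add continuous_const))
    have hRne : R.Nonempty := ⟨y - τ, ⟨hy1.1, hy1.2⟩, by simpa using hy2⟩
    obtain ⟨v, hvU, hvR⟩ := (hUd n).exists_mem_open hRo hRne
    exact ⟨v, ⟨⟨hvR.1.1, hvR.2⟩, hvU⟩, mem_ball.1 hvR.1.2⟩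
  set A : Set ℝ :=
    ⋃ k : Fin (n+1), {x : ℝ | (x : AddCircle (1:ℝ)) = (S.tseq k : AddCircle (1:ℝ))} with hAdef
  have hAc : IsClosed A :=
    isClosed_iUnion_of_finite fun k => isClosed_singleton.preimage hcont
  have hA0 : volume A = 0 := measure_iUnion_null fun k => hfib _
  obtain ⟨t', ht'T, ht'A, ht'w⟩ :=
    key hD hnull hdens hTp hTadd hτT (z := fun p => w p.1) (fun p => hw2 p.1) hNo hNacc hAc hA0
  choose v hv1 hv2 using ht'w
  choose δ hδpos hδsub using fun s' =>
    Metric.isOpen_iff.1 (hNo (F s')) (v (F s')) (hv1 (F s'))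
  have hcbN : ∀ s', closedBall (v (F s')) (δ s' / 2) ⊆ N (F s') := fun s' =>
    subset_trans (closedBall_subset_ball (by linarith [hδpos s'])) (hδsub s')
  refine ⟨{ tseq := Fin.snoc S.tseq t'
            c := fun s' => v (F s')
            rad := fun s' => δ s' / 2
            hts := ?_
            hinj := ?_
            hrpos := fun s' => by linarith [hδpos s']
            hw := ?_ }, ?_, ?_⟩
  · intro k
    refine Fin.lastCases ?_ ?_ k
    · rw [Fin.snoc_last]; exact ht'T
    · intro i; rw [Fin.snoc_castSucc]; exact S.hts i
  · intro k l h
    simp only at h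
    rcases Fin.eq_castSucc_or_eq_last k with ⟨i, rfl⟩ | rfl <;>
      rcases Fin.eq_castSucc_or_eq_last l with ⟨i', rfl⟩ | rfl
    · rw [Fin.snoc_castSucc, Fin.snoc_castSucc] at h
      exact congrArg Fin.castSucc (S.hinj h)
    · exfalso
      rw [Fin.snoc_castSucc, Fin.snoc_last] at h
      exact ht'A (mem_iUnion.2 ⟨i, h.symm⟩)
    · exfalso
      rw [Fin.snoc_last, Fin.snoc_castSucc] at h
      exact ht'A (mem_iUnion.2 ⟨i', h⟩)
    · rfl
  · intro s'
    refine ⟨v (F s'), mem_ball_self (by linarith [hδpos s']), ?_⟩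
    rw [Fin.snoc_last]
    exact hv2 (F s')
  · intro k; simp [Fin.snoc_castSucc]
  · intro s'
    refine ⟨?_, ?_, ?_⟩
    · exact fun x hx => ((hcbN s') hx).1.1
    · exact fun x hx => ((hcbN s') hx).1.2
    · exact fun x hx => ((hcbN s') hx).2

lemma base {Tp Dstar : Set ℝ} (h0 : (0:ℝ) ∈ Tp) (hDne : Dstar.Nonempty) :
    Nonempty (Stage Tp Dstar 0) := by
  obtain ⟨d₀, hd₀⟩ := hDne
  exact ⟨{ tseq := fun _ => 0
           c := fun _ => d₀
           rad := fun _ => 1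
           hts := fun _ => h0
           hinj := fun k l _ => Fin.ext (by omega)
           hrpos := fun _ => one_pos
           hw := fun _ => ⟨d₀, mem_ball_self one_pos, by simpa using hd₀⟩ }⟩


end Stmt4Aux
open MeasureTheory

/-- The circle case of the key proposition: two regular closed sets with disjoint
interiors and intersection of positive measure admit an infinite "independence set"
inside any dense subgroup, with witnesses in any residual set. -/
theorem stmt4 (ω : ℝ) (hω : Irrational ω)
    (V₀ V₁ : Set (AddCircle (1 : ℝ)))
    (h₀c : IsClosed V₀) (h₁c : IsClosed V₁)
    (h₀p : closure (interior V₀) = V₀) (h₁p : closure (interior V₁) = V₁)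
    (hdisj : interior V₀ ∩ interior V₁ = ∅)
    (hpos : 0 < volume (V₀ ∩ V₁))
    (T : AddSubgroup (AddCircle (1 : ℝ))) (hT : Dense (T : Set (AddCircle (1 : ℝ))))
    (G : Set (AddCircle (1 : ℝ))) (hG : G ∈ residual (AddCircle (1 : ℝ))) :
    ∃ I : Set (AddCircle (1 : ℝ)), I ⊆ (T : Set (AddCircle (1 : ℝ))) ∧ I.Infinite ∧
      ∀ a : AddCircle (1 : ℝ) → Bool, ∃ h ∈ G,
        ∀ t ∈ I, t + h ∈ interior (if a t then V₁ else V₀) := by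
  classical
  open Stmt4Aux Metric Set Filter Topology in
  haveI : Fact ((0:ℝ) < 1) := ⟨zero_lt_one⟩
  have hπ : IsOpenQuotientMap ((↑) : ℝ → AddCircle (1:ℝ)) :=
    QuotientAddGroup.isOpenQuotientMap_mk
  -- fibers of the projection are countable, hence null
  have hfibcnt : ∀ c : ℝ,
      {x : ℝ | (x : AddCircle (1:ℝ)) = (c : AddCircle (1:ℝ))}.Countable := by
    intro c
    have hsub : {x : ℝ | (x : AddCircle (1:ℝ)) = (c : AddCircle (1:ℝ))} ⊆
        Set.range (fun nn : ℤ => c + nn • (1:ℝ)) := by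
      intro x hx
      simp only [Set.mem_setOf_eq] at hx
      have h0 : ((x - c : ℝ) : AddCircle (1:ℝ)) = 0 := by
        rw [QuotientAddGroup.mk_sub, hx, sub_self]
      obtain ⟨nn, hnn⟩ := (AddCircle.coe_eq_zero_iff (p := (1:ℝ))).1 h0
      refine ⟨nn, ?_⟩
      show c + nn • (1:ℝ) = x
      linarith [hnn]
    exact (Set.countable_range _).mono hsub
  have hfib : ∀ c : ℝ, volume {x : ℝ | (x : AddCircle (1:ℝ)) = (c : AddCircle (1:ℝ))} = 0 :=
    fun c => (hfibcnt c).measure_zero _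
  -- data on the real line
  set Vb : Bool → Set (AddCircle (1:ℝ)) := fun b => if b then V₁ else V₀ with hVbdef
  have hVbp : ∀ b, closure (interior (Vb b)) = Vb b := by
    intro b; cases b
    · simpa [hVbdef] using h₀p
    · simpa [hVbdef] using h₁p
  set O : Bool → Set ℝ := fun b => ((↑) : ℝ → AddCircle (1:ℝ)) ⁻¹' (interior (Vb b)) with hOdef
  have hOo : ∀ b, IsOpen (O b) := fun b => isOpen_interior.preimage hπ.continuous
  set D : Set ℝ := (((↑) : ℝ → AddCircle (1:ℝ)) ⁻¹' V₀) ∩ (((↑) : ℝ → AddCircle (1:ℝ)) ⁻¹' V₁)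
    with hDdef
  have hDmeas : MeasurableSet D :=
    ((h₀c.preimage hπ.continuous).inter (h₁c.preimage hπ.continuous)).measurableSet
  have hDcl : ∀ b, D ⊆ closure (O b) := by
    intro b x hx
    have hxV : (x : AddCircle (1:ℝ)) ∈ Vb b := by
      cases b
      · exact hx.1
      · exact hx.2
    have hxcl : (x : AddCircle (1:ℝ)) ∈ closure (interior (Vb b)) := by
      rw [hVbp b]; exact hxV
    rw [_root_.mem_closure_iff]
    intro o ho hxo
    obtain ⟨y, hy1, hy2⟩ := _root_.mem_closure_iff.1 hxcl _ (hπ.isOpenMap o ho) ⟨x, hxo, rfl⟩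
    obtain ⟨x', hx'o, rfl⟩ := hy1
    exact ⟨x', hx'o, hy2⟩
  -- positive measure of D
  have hDpos : 0 < volume D := by
    have hmp := (AddCircle.measurePreserving_mk (T := (1:ℝ)) 0).measure_preimage
      (((h₀c.inter h₁c).measurableSet).nullMeasurableSet)
    have hsub : (((↑) : ℝ → AddCircle (1:ℝ)) ⁻¹' (V₀ ∩ V₁)) ∩ Set.Ioc (0:ℝ) (0 + 1) ⊆ D := by
      intro x hx
      exact ⟨hx.1.1, hx.1.2⟩
    calc (0:ℝ≥0∞) < volume (V₀ ∩ V₁) := hpos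
      _ = volume.restrict (Set.Ioc (0:ℝ) (0+1)) (((↑) : ℝ → AddCircle (1:ℝ)) ⁻¹' (V₀ ∩ V₁)) :=
          hmp.symm
      _ = volume ((((↑) : ℝ → AddCircle (1:ℝ)) ⁻¹' (V₀ ∩ V₁)) ∩ Set.Ioc (0:ℝ) (0+1)) := by
          rw [Measure.restrict_apply
            (((h₀c.inter h₁c).preimage hπ.continuous).measurableSet)]
      _ ≤ volume D := measure_mono hsub
  obtain ⟨Dstar, hDsub, hDsm, hDnull, hDdens⟩ := exists_Dstar hDmeas
  have hDstarne : Dstar.Nonempty := by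
    rw [Set.nonempty_iff_ne_empty]
    intro h
    have h2 := hDnull
    rw [h, Set.diff_empty] at h2
    exact hDpos.ne' h2
  have hDstarcl : ∀ b, Dstar ⊆ closure (O b) := fun b => hDsub.trans (hDcl b)
  -- the dense subgroup, pulled back
  set Tp : Set ℝ := ((↑) : ℝ → AddCircle (1:ℝ)) ⁻¹' (T : Set (AddCircle (1:ℝ))) with hTpdef
  have hTpd : Dense Tp := hπ.dense_preimage_iff.2 hT
  have hTadd : ∀ x ∈ Tp, ∀ y ∈ Tp, x + y ∈ Tp := by
    intro x hx y hy
    simp only [hTpdef, Set.mem_preimage] at hx hy ⊢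
    rw [QuotientAddGroup.mk_add]
    exact T.add_mem hx hy
  have h0Tp : (0:ℝ) ∈ Tp := by
    simp only [hTpdef, Set.mem_preimage]
    rw [QuotientAddGroup.mk_zero]
    exact T.zero_mem
  -- the residual set: a countable family of dense open sets
  rw [mem_residual] at hG
  obtain ⟨tG, htGsub, htGδ, htGd⟩ := hG
  obtain ⟨f, hfo, hfeq⟩ := htGδ.eq_iInter_nat
  set U : ℕ → Set ℝ := fun k => ((↑) : ℝ → AddCircle (1:ℝ)) ⁻¹' (f k) with hUdef
  have hUo : ∀ k, IsOpen (U k) := fun k => (hfo k).preimage hπ.continuous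
  have hUd : ∀ k, Dense (U k) := by
    intro k
    apply hπ.dense_preimage_iff.2
    refine htGd.mono ?_
    rw [hfeq]
    exact Set.iInter_subset f k
  -- the recursive tower of stages
  have hbase := Stmt4Aux.base h0Tp hDstarne
  have hstep : ∀ (k : ℕ) (Sk : Stmt4Aux.Stage Tp Dstar k),
      ∃ S', Stmt4Aux.Extends U O Sk S' :=
    fun k Sk => Stmt4Aux.step hDmeas hDnull hDdens hTpd hTadd hOo hDstarcl hUo hUd hfib k Sk
  let tower : ∀ k, Stmt4Aux.Stage Tp Dstar k :=
    fun k => Nat.rec hbase.some (fun k Sk => (hstep k Sk).choose) k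
  have htow : ∀ k, Stmt4Aux.Extends U O (tower k) (tower (k+1)) :=
    fun k => (hstep k (tower k)).choose_spec
  set tfin : ℕ → ℝ := fun k => (tower k).tseq (Fin.last k) with htfindef
  have hcompat : ∀ k (j : Fin (k+1)), (tower k).tseq j = tfin j.val := by
    intro k
    induction k with
    | zero =>
      intro j
      have hj : j = Fin.last 0 := Fin.ext (by omega)
      rw [hj]; rfl
    | succ k ih =>
      intro j
      rcases Fin.eq_castSucc_or_eq_last j with ⟨i, rfl⟩ | rfl
      · rw [(htow k).1 i, ih i]
        simp [Fin.coe_castSucc]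
      · rfl
  have hinjglob : Function.Injective (fun k : ℕ => ((tfin k : ℝ) : AddCircle (1:ℝ))) := by
    have hmain : ∀ k l : ℕ, k ≤ l →
        ((tfin k : ℝ) : AddCircle (1:ℝ)) = ((tfin l : ℝ) : AddCircle (1:ℝ)) → k = l := by
      intro k l hkl h
      have hk : (tower l).tseq ⟨k, by omega⟩ = tfin k := hcompat l ⟨k, by omega⟩
      have hl : (tower l).tseq (Fin.last l) = tfin l := rfl
      have heq : (⟨k, by omega⟩ : Fin (l+1)) = Fin.last l := by
        apply (tower l).hinj
        show ((tower l).tseq ⟨k, by omega⟩ : AddCircle (1:ℝ)) =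
          ((tower l).tseq (Fin.last l) : AddCircle (1:ℝ))
        rw [hk, hl]
        exact h
      have := congrArg Fin.val heq
      simpa using this
    intro k l h
    rcases le_total k l with hkl | hkl
    · exact hmain k l hkl h
    · exact (hmain l k hkl h.symm).symm
  refine ⟨Set.range (fun k : ℕ => ((tfin k : ℝ) : AddCircle (1:ℝ))), ?_, ?_, ?_⟩
  · rintro t ⟨k, rfl⟩
    exact (tower k).hts (Fin.last k)
  · exact Set.infinite_range_of_injective hinjglob
  · intro a
    set b : ℕ → Bool := fun k => a ((tfin k : ℝ) : AddCircle (1:ℝ)) with hbdef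
    set sfun : ∀ k, Fin k → Bool := fun k j => b j.val with hsfundef
    set K : ℕ → Set ℝ := fun k => closedBall ((tower k).c (sfun k)) ((tower k).rad (sfun k))
      with hKdef
    have hKsub : ∀ k, K (k+1) ⊆ K k := by
      intro k
      have h2 := ((htow k).2 (sfun (k+1))).1
      have hnode : (fun j => (sfun (k+1)) j.castSucc) = sfun k := by
        funext j; simp [hsfundef, Fin.coe_castSucc]
      rw [hnode] at h2
      exact h2.trans ball_subset_closedBall
    have hKne : ∀ k, (K k).Nonempty :=
      fun k => ⟨_, mem_closedBall_self ((tower k).hrpos _).le⟩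
    obtain ⟨h, hh⟩ := IsCompact.nonempty_iInter_of_sequence_nonempty_isCompact_isClosed K hKsub
      hKne (isCompact_closedBall _ _) (fun k => isClosed_closedBall)
    have hhK : ∀ k, h ∈ K k := fun k => Set.mem_iInter.1 hh k
    have hhU : ∀ k, h ∈ U k := fun k => ((htow k).2 (sfun (k+1))).2.2 (hhK (k+1))
    have hhO : ∀ k, h + tfin k ∈ O (b k) := by
      intro k
      have h3 := ((htow k).2 (sfun (k+1))).2.1 h (hhK (k+1))
      have hlast : sfun (k+1) (Fin.last k) = b k := by simp [hsfundef, Fin.val_last]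
      rw [hlast] at h3
      exact h3
    refine ⟨(h : AddCircle (1:ℝ)), ?_, ?_⟩
    · apply htGsub
      rw [hfeq, Set.mem_iInter]
      exact fun k => hhU k
    · rintro t ⟨k, rfl⟩
      have heq : ((tfin k : ℝ) : AddCircle (1:ℝ)) + (h : AddCircle (1:ℝ)) =
          ((h + tfin k : ℝ) : AddCircle (1:ℝ)) := by
        rw [QuotientAddGroup.mk_add, add_comm]
      rw [heq]
      exact hhO k
end

section
/- Let H be a locally compact second countable Hausdorff topological group with left Haar measure Θ. Suppose V₀, V₁ ⊆ H are closed subsets with cl(int(V₀)) = V₀, cl(int(V₁)) = V₁, int(V₀) ∩ int(V₁) = ∅, and Θ(V₀ ∩ V₁) > 0. Let T ⊆ H be a dense subgroup and 𝒢 ⊆ H a residual subset. Then there exists an infinite set I ⊆ T such that for every a ∈ {0,1}^I there exists h ∈ 𝒢 with t·h ∈ int(V_{a_t}) for all t ∈ I. -/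
open MeasureTheory Set Topology Filter Pointwise
open scoped ENNReal

section Aux

variable {H : Type*} [Group H] [TopologicalSpace H] [IsTopologicalGroup H]
  [LocallyCompactSpace H] [SecondCountableTopology H] [T2Space H]
  [MeasurableSpace H] [BorelSpace H]

theorem stmt5_aux_diff (Θ : Measure H) [Θ.IsHaarMeasure] {L : Set H} (hL : IsCompact L)
    (hLc : IsClosed L) {ε : ℝ≥0∞} (hε : ε ≠ 0) :
    ∀ᶠ w in 𝓝 (1 : H), Θ (L \ w • L) < ε := by
  have h := eventually_nhds_one_measure_smul_diff_lt (μ := Θ) hL hLc hε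
  have hcont : Tendsto (fun w : H => w⁻¹) (𝓝 1) (𝓝 (1 : H)) := by
    simpa using (continuous_inv (G := H)).tendsto (1 : H)
  filter_upwards [hcont.eventually h] with w hw
  have heq : L \ w • L = w • ((w⁻¹ • L) \ L) := by
    rw [smul_set_sdiff, smul_smul, mul_inv_cancel, one_smul]
  rw [heq, measure_smul]
  exact hw

theorem stmt5_aux_pert (Θ : Measure H) [Θ.IsHaarMeasure] {L : Set H} (hL : IsCompact L)
    (hLc : IsClosed L) {A : Type} [Fintype A] (x : A → H)
    (hc : 0 < Θ (⋂ a, x a • L)) :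
    ∃ W : Set H, IsOpen W ∧ (1 : H) ∈ W ∧
      ∀ y : A → H, (∀ a, (x a)⁻¹ * y a ∈ W) → 0 < Θ (⋂ a, y a • L) := by
  rcases isEmpty_or_nonempty A with hA | hA
  · refine ⟨univ, isOpen_univ, mem_univ _, fun y _ => ?_⟩
    rw [iInter_of_empty] at hc ⊢
    exact hc
  · set c := Θ (⋂ a, x a • L) with hcdef
    have hcne : c ≠ 0 := hc.ne'
    have hctop : c ≠ ∞ := by
      obtain ⟨a⟩ := hA
      refine ne_top_of_le_ne_top ?_ (measure_mono (iInter_subset _ a))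
      rw [measure_smul]
      exact hL.measure_lt_top.ne
    set m : ℝ≥0∞ := (Fintype.card A : ℝ≥0∞) with hmdef
    set ε := c / 2 / (m + 1) with hεdef
    have hm1 : (m + 1) ≠ 0 := by simp
    have hm1top : (m + 1) ≠ ∞ := by
      simp [hmdef, ENNReal.add_ne_top]
    have hc2 : c / 2 ≠ 0 := by
      simp only [ne_eq, ENNReal.div_eq_zero_iff, not_or]
      exact ⟨hcne, by norm_num⟩
    have hε0 : ε ≠ 0 := by
      rw [hεdef]
      simp only [ne_eq, ENNReal.div_eq_zero_iff, not_or]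
      refine ⟨?_, hm1top⟩
      simpa only [ne_eq, ENNReal.div_eq_zero_iff, not_or] using hc2
    obtain ⟨W, hWP, hWo, hW1⟩ := eventually_nhds_iff.mp (stmt5_aux_diff Θ hL hLc hε0)
    refine ⟨W, hWo, hW1, fun y hy => ?_⟩
    have hbound : ∀ a, Θ (x a • L \ y a • L) ≤ ε := by
      intro a
      have heq : x a • L \ y a • L = x a • (L \ ((x a)⁻¹ * y a) • L) := by
        rw [smul_set_sdiff, smul_smul, mul_inv_cancel_left]
      rw [heq, measure_smul]
      exact (hWP _ (hy a)).le
    have hN : Θ (⋃ a, (x a • L \ y a • L)) < c := by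
      calc Θ (⋃ a, (x a • L \ y a • L)) ≤ ∑' a, Θ (x a • L \ y a • L) :=
            measure_iUnion_le _
        _ ≤ ∑' _ : A, ε := ENNReal.tsum_le_tsum hbound
        _ = m * ε := by
            rw [tsum_fintype]
            simp [Finset.sum_const, nsmul_eq_mul, hmdef]
        _ ≤ (m + 1) * ε := by gcongr; exact le_self_add
        _ = c / 2 := by
            rw [hεdef, mul_comm]
            exact ENNReal.div_mul_cancel hm1 hm1top
        _ < c := ENNReal.half_lt_self hcne hctop
    have hsub : (⋂ a, x a • L) \ (⋃ a, (x a • L \ y a • L)) ⊆ ⋂ a, y a • L := by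
      intro z hz
      simp only [mem_diff, mem_iInter, mem_iUnion, not_exists, mem_diff, not_and, not_not]
        at hz ⊢
      intro a
      exact hz.2 a (hz.1 a)
    rw [pos_iff_ne_zero]
    intro h0
    have h1 : Θ ((⋂ a, x a • L) \ (⋃ a, (x a • L \ y a • L))) = 0 :=
      le_antisymm (le_trans (measure_mono hsub) h0.le) (zero_le)
    have h2 : c ≤ Θ ((⋂ a, x a • L) \ (⋃ a, (x a • L \ y a • L)))
        + Θ (⋃ a, (x a • L \ y a • L)) :=
      le_trans (measure_mono (subset_diff_union _ _)) (measure_union_le _ _)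
    rw [h1, zero_add] at h2
    exact absurd h2 (not_le.mpr hN)

def stmt5Good (Θ : Measure H) (V : Bool → Set H) (L : Set H) (Gd : ℕ → Set H) (T : Subgroup H)
    (n : ℕ) (ts : Fin n → H) (U : (Fin n → Bool) → Set H) (xp : (Fin n → Bool) → H) : Prop :=
  (∀ i, ts i ∈ T) ∧ Function.Injective ts ∧
  (∀ a, IsOpen (U a)) ∧ (∀ a, xp a ∈ U a) ∧
  (∀ a, IsCompact (closure (U a))) ∧ (∀ a, closure (U a) ⊆ Gd n) ∧
  (∀ a i, U a ⊆ (fun h => ts i * h) ⁻¹' interior (V (a i))) ∧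
  0 < Θ (⋂ a, xp a • L)

theorem stmt5_base (Θ : Measure H) [Θ.IsHaarMeasure]
    (V : Bool → Set H) (L : Set H) (Gd : ℕ → Set H) (T : Subgroup H)
    (hLpos : 0 < Θ L)
    (hGdo : ∀ n, IsOpen (Gd n)) (hGdd : ∀ n, Dense (Gd n)) :
    ∃ (ts : Fin 0 → H) (U : (Fin 0 → Bool) → Set H) (xp : (Fin 0 → Bool) → H),
      stmt5Good Θ V L Gd T 0 ts U xp := by
  obtain ⟨x0, hx0⟩ : (Gd 0).Nonempty := (hGdd 0).nonempty
  obtain ⟨K, hK, hxK, hKsub⟩ := exists_compact_subset (hGdo 0) hx0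
  have hclK : closure (interior K) ⊆ K := closure_minimal interior_subset hK.isClosed
  refine ⟨fun i => i.elim0, fun _ => interior K, fun _ => x0,
    fun i => i.elim0, fun i => i.elim0, fun _ => isOpen_interior, fun _ => hxK,
    fun _ => hK.of_isClosed_subset isClosed_closure hclK,
    fun _ => hclK.trans hKsub, fun a i => i.elim0, ?_⟩
  rw [iInter_const, measure_smul]
  exact hLpos

theorem stmt5_step (Θ : Measure H) [Θ.IsHaarMeasure]
    (V : Bool → Set H) (L : Set H) (Gd : ℕ → Set H) (T : Subgroup H)
    (hLcomp : IsCompact L) (hLclosed : IsClosed L)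
    (hLV : ∀ (b : Bool), ∀ l ∈ L, l⁻¹ ∈ closure (interior (V b)))
    (hGdo : ∀ n, IsOpen (Gd n)) (hGdd : ∀ n, Dense (Gd n))
    (hT : Dense (T : Set H))
    (hinf : ∀ U : Set H, IsOpen U → U.Nonempty → U.Infinite)
    (n : ℕ) (ts : Fin n → H) (U : (Fin n → Bool) → Set H) (xp : (Fin n → Bool) → H)
    (hg : stmt5Good Θ V L Gd T n ts U xp) :
    ∃ (ts' : Fin (n+1) → H) (U' : (Fin (n+1) → Bool) → Set H)
      (xp' : (Fin (n+1) → Bool) → H),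
      stmt5Good Θ V L Gd T (n+1) ts' U' xp' ∧
      (∀ i : Fin n, ts' i.castSucc = ts i) ∧
      (∀ a' : Fin (n+1) → Bool, closure (U' a') ⊆ U (fun i => a' i.castSucc)) := by
  obtain ⟨hgT, hgInj, hgO, hgx, hgK, hgG, hgV, hgM⟩ := hg
  classical
  obtain ⟨W₁, hW₁o, hW₁1, hP₁⟩ := stmt5_aux_pert Θ hLcomp hLclosed xp hgM
  set W : Set H := W₁ ∩ ⋂ a, (xp a)⁻¹ • U a with hWdef
  have hWo : IsOpen W := hW₁o.inter (isOpen_iInter_of_finite fun a => (hgO a).smul _)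
  have hW1 : (1:H) ∈ W := by
    refine ⟨hW₁1, mem_iInter.mpr fun a => ?_⟩
    rw [mem_smul_set_iff_inv_smul_mem]
    simpa using hgx a
  have hWsub : ∀ a, ∀ w ∈ W, xp a * w ∈ U a := by
    intro a w hw
    have h2 := mem_iInter.mp hw.2 a
    rw [mem_smul_set_iff_inv_smul_mem] at h2
    simpa [smul_eq_mul, mul_assoc] using h2
  -- the open set S
  set S : Set H := ⋂ a, (xp a • W) * L with hSdef
  have hSo : IsOpen S := isOpen_iInter_of_finite fun a => ((hWo.smul _).mul_right)
  have hSne : S.Nonempty := by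
    refine Nonempty.mono ?_ (nonempty_of_measure_ne_zero hgM.ne')
    intro q hq
    rw [mem_iInter] at hq ⊢
    intro a
    obtain ⟨lq, hlq, hlqe⟩ := mem_smul_set.mp (hq a)
    have h1 : (xp a : H) ∈ xp a • W := by
      simpa [smul_eq_mul] using smul_mem_smul_set (a := xp a) hW1
    exact mem_mul.mpr ⟨xp a, h1, lq, hlq, by simpa [smul_eq_mul] using hlqe⟩
  have hSTinf : (S ∩ (T : Set H)).Infinite := by
    intro hfin
    have h1 : S ⊆ closure (S ∩ (T : Set H)) := hT.open_subset_closure_inter hSo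
    rw [hfin.isClosed.closure_eq] at h1
    exact hinf S hSo hSne (hfin.subset h1)
  obtain ⟨s, hsST, hsnotin⟩ :=
    (hSTinf.diff (Set.finite_range (fun i : Fin n => (ts i)⁻¹))).nonempty
  set t : H := s⁻¹ with htdef
  have htT : t ∈ T := T.inv_mem hsST.2
  have htnew : ∀ i, t ≠ ts i := by
    intro i h
    refine hsnotin ⟨i, ?_⟩
    show (ts i)⁻¹ = s
    rw [← h, htdef, inv_inv]
  have hdecomp : ∀ a, ∃ wa ∈ W, ∃ la ∈ L, (xp a * wa) * la = s := by
    intro a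
    have hs : s ∈ (xp a • W) * L := mem_iInter.mp hsST.1 a
    obtain ⟨q, hq, la, hla, he⟩ := mem_mul.mp hs
    obtain ⟨wa, hwa, hqe⟩ := mem_smul_set.mp hq
    exact ⟨wa, hwa, la, hla, by rw [← he, ← hqe]; simp [smul_eq_mul]⟩
  choose w hwW l hlL hslw using hdecomp
  set z : (Fin n → Bool) → H := fun a => xp a * w a with hzdef
  have hzU : ∀ a, z a ∈ U a := fun a => hWsub a (w a) (hwW a)
  have htz : ∀ a, t * z a = (l a)⁻¹ := by
    intro a
    rw [htdef, hzdef, ← hslw a]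
    group
  have hzM : 0 < Θ (⋂ a, z a • L) := by
    refine hP₁ z fun a => ?_
    have : (xp a)⁻¹ * z a = w a := by rw [hzdef]; group
    rw [this]
    exact (hwW a).1
  -- children
  set res : (Fin (n+1) → Bool) → (Fin n → Bool) := fun a' i => a' i.castSucc with hres
  have hressurj : Function.Surjective res := by
    intro a
    exact ⟨Fin.snoc a true, funext fun i => by simp [hres, Fin.snoc_castSucc]⟩
  have hzM' : 0 < Θ (⋂ a' : Fin (n+1) → Bool, z (res a') • L) := by
    rwa [hressurj.iInter_comp (fun a => z a • L)]
  obtain ⟨W₂', hW₂'o, hW₂'1, hP₂⟩ :=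
    stmt5_aux_pert Θ hLcomp hLclosed (fun a' => z (res a')) hzM'
  set W₂ : Set H := W₂' ∩ ⋂ a, (z a)⁻¹ • U a with hW₂def
  have hW₂o : IsOpen W₂ := hW₂'o.inter (isOpen_iInter_of_finite fun a => (hgO a).smul _)
  have hW₂1 : (1:H) ∈ W₂ := by
    refine ⟨hW₂'1, mem_iInter.mpr fun a => ?_⟩
    rw [mem_smul_set_iff_inv_smul_mem]
    simpa using hzU a
  have hW₂sub : ∀ a, z a • W₂ ⊆ U a := by
    intro a p hp
    obtain ⟨v, hv, hve⟩ := mem_smul_set.mp hp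
    have h2 := mem_iInter.mp hv.2 a
    rw [mem_smul_set_iff_inv_smul_mem] at h2
    rw [← hve]
    simpa [smul_eq_mul, mul_assoc] using h2
  have hx'ex : ∀ a' : Fin (n+1) → Bool, ∃ p,
      (p ∈ z (res a') • W₂ ∧ t * p ∈ interior (V (a' (Fin.last n)))) ∧ p ∈ Gd (n+1) := by
    intro a'
    have hO : IsOpen ((z (res a') • W₂) ∩ ((fun h => t * h) ⁻¹' interior (V (a' (Fin.last n))))) :=
      (hW₂o.smul _).inter (isOpen_interior.preimage (continuous_const.mul continuous_id))
    have hOne : ((z (res a') • W₂) ∩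
        ((fun h => t * h) ⁻¹' interior (V (a' (Fin.last n))))).Nonempty := by
      have hcl : t * z (res a') ∈ closure (interior (V (a' (Fin.last n)))) := by
        rw [htz]
        exact hLV _ _ (hlL _)
      obtain ⟨q, hq1, hq2⟩ := mem_closure_iff.mp hcl ((t * z (res a')) • W₂)
        (hW₂o.smul _) (by simpa [smul_eq_mul] using smul_mem_smul_set (a := t * z (res a')) hW₂1)
      obtain ⟨v, hv, hqe⟩ := mem_smul_set.mp hq1
      refine ⟨z (res a') * v, smul_mem_smul_set hv, ?_⟩
      show t * (z (res a') * v) ∈ interior (V (a' (Fin.last n)))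
      have : t * (z (res a') * v) = q := by rw [← hqe]; simp [smul_eq_mul, mul_assoc]
      rw [this]
      exact hq2
    obtain ⟨p, hpG, hpO⟩ := (hGdd (n+1)).exists_mem_open hO hOne
    exact ⟨p, hpO, hpG⟩
  choose x' hx'WV hx'G using hx'ex
  have hU'ex : ∀ a' : Fin (n+1) → Bool, ∃ Uo : Set H, IsOpen Uo ∧ x' a' ∈ Uo ∧
      IsCompact (closure Uo) ∧ closure Uo ⊆ ((z (res a') • W₂) ∩
        ((fun h => t * h) ⁻¹' interior (V (a' (Fin.last n))))) ∩ Gd (n+1) := by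
    intro a'
    have hOo : IsOpen (((z (res a') • W₂) ∩
        ((fun h => t * h) ⁻¹' interior (V (a' (Fin.last n))))) ∩ Gd (n+1)) :=
      ((hW₂o.smul _).inter (isOpen_interior.preimage
        (continuous_const.mul continuous_id))).inter (hGdo (n+1))
    obtain ⟨K, hK, hxK, hKsub⟩ := exists_compact_subset hOo ⟨hx'WV a', hx'G a'⟩
    have hclK : closure (interior K) ⊆ K := closure_minimal interior_subset hK.isClosed
    exact ⟨interior K, isOpen_interior, hxK,
      hK.of_isClosed_subset isClosed_closure hclK, hclK.trans hKsub⟩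
  choose U' hU'o hU'x hU'K hU'sub using hU'ex
  have hx'W₂ : ∀ a', (z (res a'))⁻¹ * x' a' ∈ W₂' := by
    intro a'
    obtain ⟨v, hv, hve⟩ := mem_smul_set.mp (hx'WV a').1
    have : (z (res a'))⁻¹ * x' a' = v := by rw [← hve]; simp [smul_eq_mul]
    rw [this]
    exact hv.1
  refine ⟨Fin.snoc ts t, U', x', ⟨?_, ?_, hU'o, hU'x, hU'K,
      fun a' => (hU'sub a').trans inter_subset_right, ?_, ?_⟩,
      fun i => by simp, ?_⟩
  · intro i
    refine Fin.lastCases ?_ ?_ i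
    · rw [Fin.snoc_last]; exact htT
    · intro j; rw [Fin.snoc_castSucc]; exact hgT j
  · intro i j hij
    rcases Fin.eq_castSucc_or_eq_last i with ⟨i', rfl⟩ | rfl <;>
      rcases Fin.eq_castSucc_or_eq_last j with ⟨j', rfl⟩ | rfl
    · rw [Fin.snoc_castSucc, Fin.snoc_castSucc] at hij
      rw [hgInj hij]
    · rw [Fin.snoc_castSucc, Fin.snoc_last] at hij
      exact absurd hij.symm (htnew i')
    · rw [Fin.snoc_last, Fin.snoc_castSucc] at hij
      exact absurd hij (htnew j')
    · rfl
  · -- the V-constraints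
    intro a' i
    refine Fin.lastCases ?_ ?_ i
    · rw [Fin.snoc_last]
      exact (subset_closure.trans (hU'sub a')).trans
        (inter_subset_left.trans inter_subset_right)
    · intro j
      rw [Fin.snoc_castSucc]
      intro p hp
      have hpU : p ∈ U (res a') :=
        hW₂sub (res a') (((hU'sub a').trans
          (inter_subset_left.trans inter_subset_left)) (subset_closure hp))
      exact hgV (res a') j hpU
  · exact hP₂ x' hx'W₂
  · intro a'
    exact ((hU'sub a').trans (inter_subset_left.trans inter_subset_left)).trans
      (hW₂sub (res a'))

noncomputable def stmt5Seq {α : ℕ → Type*} {P : (n : ℕ) → α n → Prop}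
    {R : (n : ℕ) → α n → α (n+1) → Prop} (base : {a : α 0 // P 0 a})
    (next : ∀ n (a : α n), P n a → {b : α (n+1) // P (n+1) b ∧ R n a b}) :
    (n : ℕ) → {a : α n // P n a}
  | 0 => base
  | (n+1) =>
    ⟨(next n (stmt5Seq base next n).1 (stmt5Seq base next n).2).1,
     (next n (stmt5Seq base next n).1 (stmt5Seq base next n).2).2.1⟩

theorem stmt5Seq_succ {α : ℕ → Type*} {P : (n : ℕ) → α n → Prop}
    {R : (n : ℕ) → α n → α (n+1) → Prop} (base : {a : α 0 // P 0 a})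
    (next : ∀ n (a : α n), P n a → {b : α (n+1) // P (n+1) b ∧ R n a b}) (n : ℕ) :
    R n (stmt5Seq base next n).1 (stmt5Seq base next (n+1)).1 :=
  (next n (stmt5Seq base next n).1 (stmt5Seq base next n).2).2.2

end Aux

/-- Key proposition for general locally compact second countable Hausdorff groups:
regular closed sets with disjoint interiors and positive Haar measure of the
intersection admit an infinite independence set inside any dense subgroup. -/
theorem stmt5 {H : Type*} [Group H] [TopologicalSpace H] [IsTopologicalGroup H]
    [LocallyCompactSpace H] [SecondCountableTopology H] [T2Space H]
    [MeasurableSpace H] [BorelSpace H]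
    (Θ : Measure H) [Θ.IsHaarMeasure]
    (V₀ V₁ : Set H)
    (h₀c : IsClosed V₀) (h₁c : IsClosed V₁)
    (h₀p : closure (interior V₀) = V₀) (h₁p : closure (interior V₁) = V₁)
    (hdisj : interior V₀ ∩ interior V₁ = ∅)
    (hpos : 0 < Θ (V₀ ∩ V₁))
    (T : Subgroup H) (hT : Dense (T : Set H))
    (𝒢 : Set H) (h𝒢 : 𝒢 ∈ residual H) :
    ∃ I : Set H, I ⊆ (T : Set H) ∧ I.Infinite ∧
      ∀ a : H → Bool, ∃ h ∈ 𝒢,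
        ∀ t ∈ I, t * h ∈ interior (if a t then V₁ else V₀) := by
  classical
  -- no isolated points
  have hsing : ∀ y : H, ¬ IsOpen ({y} : Set H) := by
    intro y hy
    have hall : ∀ z : H, IsOpen ({z} : Set H) := by
      intro z
      have heq : ({z} : Set H) = (fun h => y * z⁻¹ * h) ⁻¹' {y} := by
        ext p
        simp only [mem_singleton_iff, mem_preimage]
        constructor
        · rintro rfl; group
        · intro hp
          have : y * z⁻¹ * p = y * z⁻¹ * z := by rw [hp]; group
          exact mul_left_cancel this
      rw [heq]
      exact hy.preimage (continuous_const.mul continuous_id)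
    have hV0 : IsOpen V₀ := by
      have : V₀ = ⋃ v ∈ V₀, {v} := by simp
      rw [this]; exact isOpen_biUnion fun v _ => hall v
    have hV1 : IsOpen V₁ := by
      have : V₁ = ⋃ v ∈ V₁, {v} := by simp
      rw [this]; exact isOpen_biUnion fun v _ => hall v
    rw [← hV0.interior_eq, ← hV1.interior_eq, hdisj] at hpos
    simp at hpos
  have hinf : ∀ U : Set H, IsOpen U → U.Nonempty → U.Infinite := by
    intro U hU ⟨u, hu⟩ hfin
    apply hsing u
    have h1 : IsClosed (U \ {u}) := (hfin.subset diff_subset).isClosed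
    have heq : ({u} : Set H) = U ∩ (U \ {u})ᶜ := by
      ext p
      simp only [mem_singleton_iff, mem_inter_iff, mem_compl_iff, mem_diff, not_and, not_not]
      constructor
      · rintro rfl; exact ⟨hu, fun _ => rfl⟩
      · rintro ⟨hpU, hp⟩; exact hp hpU
    rw [heq]
    exact hU.inter h1.isOpen_compl
  -- compact positive-measure subset of (V₀ ∩ V₁)⁻¹
  have hDm : Θ ((V₀ ∩ V₁)⁻¹) ≠ 0 := by
    intro h0
    exact hpos.ne' ((measure_inv_null Θ).mp h0)
  obtain ⟨L, hLD, hLcomp, hLpos⟩ :=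
    ((h₀c.inter h₁c).inv.measurableSet).exists_lt_isCompact
      (pos_iff_ne_zero.mpr hDm)
  have hLclosed : IsClosed L := hLcomp.isClosed
  -- Bool-indexed targets
  set V : Bool → Set H := fun b => if b then V₁ else V₀ with hV
  have hLV : ∀ (b : Bool), ∀ l ∈ L, l⁻¹ ∈ closure (interior (V b)) := by
    intro b l hl
    have hmem : l⁻¹ ∈ V₀ ∩ V₁ := hLD hl
    cases b
    · show l⁻¹ ∈ closure (interior V₀)
      rw [h₀p]; exact hmem.1
    · show l⁻¹ ∈ closure (interior V₁)
      rw [h₁p]; exact hmem.2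
  -- residual decomposition into a decreasing sequence of dense open sets
  obtain ⟨S, hSo, hSd, hScnt, hSsub⟩ := mem_residual_iff.mp h𝒢
  obtain ⟨f, hfr⟩ := (hScnt.insert univ).exists_eq_range ⟨univ, mem_insert _ _⟩
  have hfo : ∀ n, IsOpen (f n) := by
    intro n
    have : f n ∈ insert univ S := hfr ▸ mem_range_self n
    rcases mem_insert_iff.mp this with h | h
    · rw [h]; exact isOpen_univ
    · exact hSo _ h
  have hfd : ∀ n, Dense (f n) := by
    intro n
    have : f n ∈ insert univ S := hfr ▸ mem_range_self n
    rcases mem_insert_iff.mp this with h | h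
    · rw [h]; exact dense_univ
    · exact hSd _ h
  set Gd : ℕ → Set H := fun n => ⋂ m ∈ Finset.range (n+1), f m with hGd
  have hGdo : ∀ n, IsOpen (Gd n) := fun n =>
    isOpen_biInter_finset fun m _ => hfo m
  have hGdd : ∀ n, Dense (Gd n) := by
    intro n
    induction n with
    | zero => simpa [hGd] using hfd 0
    | succ n ih =>
        have heq : Gd (n+1) = f (n+1) ∩ Gd n := by
          simp only [hGd]
          rw [Finset.range_add_one, Finset.set_biInter_insert]
        rw [heq]
        exact (hfd (n+1)).inter_of_isOpen_left ih (hfo (n+1))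
  have hGdanti : ∀ n, Gd (n+1) ⊆ Gd n := by
    intro n p hp
    simp only [hGd, mem_iInter, Finset.mem_range] at hp ⊢
    intro m hm
    exact hp m (by omega)
  have hGdf : ∀ n, Gd n ⊆ f n := by
    intro n p hp
    simp only [hGd, mem_iInter, Finset.mem_range] at hp
    exact hp n (by omega)
  -- construct the sequence
  have hstep : ∀ n (d : (Fin n → H) × ((Fin n → Bool) → Set H) × ((Fin n → Bool) → H)),
      stmt5Good Θ V L Gd T n d.1 d.2.1 d.2.2 →
      ∃ d' : (Fin (n+1) → H) × ((Fin (n+1) → Bool) → Set H) × ((Fin (n+1) → Bool) → H),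
        stmt5Good Θ V L Gd T (n+1) d'.1 d'.2.1 d'.2.2 ∧
        ((∀ i : Fin n, d'.1 i.castSucc = d.1 i) ∧
          (∀ a' : Fin (n+1) → Bool, closure (d'.2.1 a') ⊆ d.2.1 (fun i => a' i.castSucc))) := by
    intro n d hd
    obtain ⟨ts', U', xp', hgood, hr1, hr2⟩ :=
      stmt5_step Θ V L Gd T hLcomp hLclosed hLV hGdo hGdd hT hinf n d.1 d.2.1 d.2.2 hd
    exact ⟨⟨ts', U', xp'⟩, hgood, hr1, hr2⟩
  obtain ⟨ts0, U0, xp0, hd0⟩ := stmt5_base Θ V L Gd T hLpos hGdo hGdd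
  let next : ∀ n (d : (Fin n → H) × ((Fin n → Bool) → Set H) × ((Fin n → Bool) → H)),
      stmt5Good Θ V L Gd T n d.1 d.2.1 d.2.2 →
      {d' : (Fin (n+1) → H) × ((Fin (n+1) → Bool) → Set H) × ((Fin (n+1) → Bool) → H) //
        stmt5Good Θ V L Gd T (n+1) d'.1 d'.2.1 d'.2.2 ∧
        ((∀ i : Fin n, d'.1 i.castSucc = d.1 i) ∧
          (∀ a' : Fin (n+1) → Bool, closure (d'.2.1 a') ⊆ d.2.1 (fun i => a' i.castSucc)))} :=
    fun n d hd => ⟨(hstep n d hd).choose, (hstep n d hd).choose_spec⟩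
  let seq := stmt5Seq ⟨⟨ts0, U0, xp0⟩, hd0⟩ next
  have hR := stmt5Seq_succ ⟨⟨ts0, U0, xp0⟩, hd0⟩ next
  set Ts : (n : ℕ) → Fin n → H := fun n => (seq n).1.1 with hTs
  set Us : (n : ℕ) → (Fin n → Bool) → Set H := fun n => (seq n).1.2.1 with hUs
  set Xs : (n : ℕ) → (Fin n → Bool) → H := fun n => (seq n).1.2.2 with hXs
  have hGn : ∀ n, stmt5Good Θ V L Gd T n (Ts n) (Us n) (Xs n) := fun n => (seq n).2
  have hcoh : ∀ m (i : Fin m), Ts (m+1) i.castSucc = Ts m i := fun m i => (hR m).1 i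
  have hnest : ∀ m (a' : Fin (m+1) → Bool),
      closure (Us (m+1) a') ⊆ Us m (fun i => a' i.castSucc) := fun m a' => (hR m).2 a'
  set τ : ℕ → H := fun k => Ts (k+1) (Fin.last k) with hτ
  have hval : ∀ m k (h : k < m), Ts m ⟨k, h⟩ = τ k := by
    intro m
    induction m with
    | zero => intro k h; exact absurd h (Nat.not_lt_zero k)
    | succ m ih =>
        intro k h
        rcases Nat.lt_succ_iff_lt_or_eq.mp h with h' | rfl
        · have hcast : (⟨k, h⟩ : Fin (m+1)) = Fin.castSucc ⟨k, h'⟩ := rfl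
          rw [hcast, hcoh m ⟨k, h'⟩]
          exact ih k h'
        · rfl
  have hτinj : Function.Injective τ := by
    have key : ∀ k k', k < k' → τ k = τ k' → False := by
      intro k k' hlt he
      have h1 : Ts (k'+1) ⟨k, by omega⟩ = τ k := hval (k'+1) k (by omega)
      have h2 : Ts (k'+1) ⟨k', by omega⟩ = τ k' := hval (k'+1) k' (by omega)
      have := (hGn (k'+1)).2.1 (h1.trans (he.trans h2.symm))
      simp only [Fin.mk.injEq] at this
      omega
    intro k k' he
    rcases lt_trichotomy k k' with h | h | h
    · exact absurd he (fun he => key k k' h he)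
    · exact h
    · exact absurd he.symm (fun he => key k' k h he)
  have hτT : ∀ k, τ k ∈ T := fun k => (hGn (k+1)).1 (Fin.last k)
  refine ⟨Set.range τ, ?_, Set.infinite_range_of_injective hτinj, ?_⟩
  · rintro p ⟨k, rfl⟩
    exact hτT k
  intro a
  -- the branch
  set bs : (n : ℕ) → Fin n → Bool := fun n i => a (τ i.1) with hbs
  have hbsres : ∀ n, (fun i : Fin n => bs (n+1) i.castSucc) = bs n := by
    intro n
    funext i
    rfl
  set C : ℕ → Set H := fun n => closure (Us (n+1) (bs (n+1))) with hC
  have hCne : ∀ n, (C n).Nonempty :=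
    fun n => ⟨Xs (n+1) (bs (n+1)), subset_closure ((hGn (n+1)).2.2.2.1 _)⟩
  have hCdec : ∀ n, C (n+1) ⊆ C n := by
    intro n
    have h1 := hnest (n+1) (bs (n+2))
    rw [hbsres (n+1)] at h1
    exact h1.trans subset_closure
  obtain ⟨h, hh⟩ := IsCompact.nonempty_iInter_of_sequence_nonempty_isCompact_isClosed
    C hCdec hCne ((hGn 1).2.2.2.2.1 _) (fun n => isClosed_closure)
  have hhmem : ∀ n, h ∈ C n := fun n => mem_iInter.mp hh n
  have hhU : ∀ n, h ∈ Us (n+1) (bs (n+1)) := by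
    intro n
    have h1 := hnest (n+1) (bs (n+2))
    rw [hbsres (n+1)] at h1
    exact h1 (hhmem (n+1))
  have hhGd : ∀ n, h ∈ Gd n := by
    intro n
    have h1 : h ∈ Gd (n+1) := (hGn (n+1)).2.2.2.2.2.1 _ (hhmem n)
    exact hGdanti n h1
  refine ⟨h, ?_, ?_⟩
  · -- h ∈ 𝒢
    apply hSsub
    intro s hs
    have : s ∈ range f := by rw [← hfr]; exact mem_insert_of_mem _ hs
    obtain ⟨m, rfl⟩ := this
    exact hGdf m (hhGd m)
  · rintro p ⟨k, rfl⟩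
    have hmem := (hGn (k+1)).2.2.2.2.2.2.1 (bs (k+1)) (Fin.last k) (hhU k)
    exact hmem
end

section
/- Let (X, T) and (H, T) be topological dynamical systems on compact metric spaces with a factor map β : X → H, and suppose β is almost one-to-one, i.e., X₀ = {x ∈ X : β⁻¹({β(x)}) = {x}} is dense in X. If (H, T) is minimal, then (X, T) is minimal. -/
/-- An almost one-to-one extension of a minimal system is minimal. -/
theorem stmt16 {T X H : Type*} [Group T]
    [MetricSpace X] [CompactSpace X] [MetricSpace H] [CompactSpace H]
    [MulAction T X] [MulAction T H]
    (hcX : ∀ t : T, Continuous fun x : X => t • x)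
    (hcH : ∀ t : T, Continuous fun h : H => t • h)
    (β : X → H) (hβc : Continuous β) (hβsurj : Function.Surjective β)
    (hβeq : ∀ (t : T) (x : X), β (t • x) = t • β x)
    (h11 : Dense {x : X | β ⁻¹' {β x} = {x}})
    (hmin : ∀ h : H, Dense (MulAction.orbit T h)) :
    ∀ x : X, Dense (MulAction.orbit T x) := by
  intro x
  rw [dense_iff_inter_open]
  intro U hU hUne
  obtain ⟨x₀, hx₀fib, hx₀U⟩ := h11.exists_mem_open hU hUne
  have hclosed : IsClosedMap β := hβc.isClosedMap
  set V := (β '' Uᶜ)ᶜ with hV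
  have hVopen : IsOpen V := (hclosed _ hU.isClosed_compl).isOpen_compl
  have hβx₀V : β x₀ ∈ V := by
    intro hmem
    obtain ⟨y, hyU, hy⟩ := hmem
    have hyfib : y ∈ β ⁻¹' {β x₀} := hy
    rw [hx₀fib] at hyfib
    exact hyU (hyfib ▸ hx₀U)
  obtain ⟨h, hhorb, hhV⟩ := (hmin (β x)).exists_mem_open hVopen ⟨β x₀, hβx₀V⟩
  obtain ⟨t, rfl⟩ := hhorb
  refine ⟨t • x, ?_, ⟨t, rfl⟩⟩
  by_contra htU
  have hmem : β (t • x) ∈ β '' Uᶜ := ⟨t • x, htU, rfl⟩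
  rw [hβeq] at hmem
  exact hhV hmem
end

section
/- Let W(x) for x ∈ {0,1}^ℕ denote a family of compact subsets of the circle obtained from a fixed Cantor set C of positive measure by filling in gaps J_n with x_n = 1: W(x) = C ∪ ⋃_{n : x_n = 1} J_n, where (J_n) enumerates the connected components of the complement of C. Suppose entropy values h : {0,1}^ℕ → [0, ∞] satisfy: h(x) depends only on the tail of x (i.e., h(x) = h(y) whenever x_n = y_n for all but finitely many n). If there exist x, y with h(x) = 0 and h(y) > 0, then h, viewed as a function of the window W(x) in the Hausdorff metric on compact sets, is neither upper nor lower semicontinuous at W(x) and W(y) respectively: for every k, the modified sequences z(k; x, y) (agreeing with x on the first k coordinates and y thereafter) satisfy W(z(k;x,y)) → W(x) in Hausdorff metric as k → ∞ while h(z(k;x,y)) = h(y) > 0, and symmetrically W(z(k;y,x)) → W(y) with h(z(k;y,x)) = h(x) = 0. -/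
open Filter

/-- Entropy, as a tail-dependent function of the gap-filling pattern of windows
`W(x) = C ∪ ⋃_{xₙ=1} Jₙ`, is neither upper nor lower semicontinuous in the window
with respect to the Hausdorff metric. -/
theorem stmt18 (C : Set (AddCircle (1 : ℝ))) (hC : IsCompact C)
    (hpos : 0 < MeasureTheory.volume C)
    (J : ℕ → Set (AddCircle (1 : ℝ)))
    (hJopen : ∀ n, IsOpen (J n)) (hJconn : ∀ n, IsConnected (J n))
    (hJdisj : Pairwise (Function.onFun Disjoint J))
    (hJunion : Cᶜ = ⋃ n, J n)
    (hJdiam : Tendsto (fun n => EMetric.diam (J n)) atTop (nhds 0))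
    (W : (ℕ → Bool) → Set (AddCircle (1 : ℝ)))
    (hW : ∀ x, W x = C ∪ ⋃ n ∈ {n : ℕ | x n = true}, J n)
    (h : (ℕ → Bool) → ENNReal)
    (htail : ∀ x y : ℕ → Bool, (∀ᶠ n in atTop, x n = y n) → h x = h y)
    (x y : ℕ → Bool) (hx : h x = 0) (hy : 0 < h y)
    (z : ℕ → (ℕ → Bool) → (ℕ → Bool) → ℕ → Bool)
    (hz : ∀ k u v n, z k u v n = if n ≤ k then u n else v n) :
    Tendsto (fun k => Metric.hausdorffDist (W (z k x y)) (W x)) atTop (nhds 0) ∧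
    (∀ k, h (z k x y) = h y) ∧
    Tendsto (fun k => Metric.hausdorffDist (W (z k y x)) (W y)) atTop (nhds 0) ∧
    (∀ k, h (z k y x) = h x) := by
  -- C is nonempty
  have hCne : C.Nonempty := by
    rcases Set.eq_empty_or_nonempty C with hE | hE
    · simp [hE] at hpos
    · exact hE
  -- each gap avoids C
  have hJsub : ∀ n, J n ⊆ Cᶜ := fun n => hJunion ▸ Set.subset_iUnion J n
  -- each gap's closure meets C
  have hclo : ∀ n, ∃ c ∈ C, c ∈ closure (J n) := by
    intro n
    by_contra hcon
    push_neg at hcon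
    have hsub : closure (J n) ⊆ J n := by
      intro q hq
      have hqC : q ∉ C := fun hqC => hcon q hqC hq
      have hqc : q ∈ ⋃ m, J m := hJunion ▸ hqC
      obtain ⟨m, hm⟩ := Set.mem_iUnion.mp hqc
      rcases eq_or_ne m n with rfl | hmn
      · exact hm
      · exfalso
        obtain ⟨r, hr1, hr2⟩ := mem_closure_iff.mp hq (J m) (hJopen m) hm
        exact Set.disjoint_left.mp (hJdisj hmn) hr1 hr2
    have hclopen : IsClopen (J n) := ⟨isClosed_of_closure_subset hsub, hJopen n⟩
    rcases isClopen_iff.mp hclopen with hE | hU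
    · exact (hJconn n).nonempty.ne_empty hE
    · obtain ⟨c, hc⟩ := hCne
      exact hJsub n (hU ▸ Set.mem_univ c) hc
  -- key distance bound
  have key : ∀ n, ∀ p ∈ J n, EMetric.infEdist p C ≤ EMetric.diam (J n) := by
    intro n p hp
    obtain ⟨c, hcC, hcclo⟩ := hclo n
    calc EMetric.infEdist p C ≤ edist p c := EMetric.infEdist_le_edist_of_mem hcC
      _ ≤ EMetric.diam (closure (J n)) :=
          EMetric.edist_le_diam_of_mem (subset_closure hp) hcclo
      _ = EMetric.diam (J n) := EMetric.diam_closure (J n)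
  set D : ℕ → ENNReal := fun k => ⨆ n, ⨆ _ : k < n, EMetric.diam (J n) with hD
  have hDtend : Tendsto D atTop (nhds 0) := by
    rw [ENNReal.tendsto_nhds_zero]
    intro ε hε
    obtain ⟨N, hN⟩ := eventually_atTop.mp ((ENNReal.tendsto_nhds_zero.mp hJdiam) ε hε)
    filter_upwards [eventually_ge_atTop N] with k hk
    exact iSup₂_le fun n hn => hN n (le_trans hk hn.le)
  -- main Hausdorff bound
  have hmain : ∀ (u v : ℕ → Bool) (k : ℕ),
      EMetric.hausdorffEdist (W (z k u v)) (W u) ≤ D k := by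
    intro u v k
    have hCW : ∀ w : ℕ → Bool, C ⊆ W w := fun w => by
      rw [hW]; exact Set.subset_union_left
    apply EMetric.hausdorffEdist_le_of_infEdist
    · intro p hp
      rw [hW] at hp
      rcases hp with hp | hp
      · have : p ∈ W u := hCW u hp
        simp [EMetric.infEdist_zero_of_mem this]
      · obtain ⟨n, hn, hpJ⟩ := Set.mem_iUnion₂.mp hp
        by_cases hk' : n ≤ k
        · have hn' : z k u v n = true := hn
          rw [hz] at hn'
          have hun : u n = true := by simpa [hk'] using hn'
          have : p ∈ W u := by
            rw [hW]; exact Or.inr (Set.mem_iUnion₂.mpr ⟨n, hun, hpJ⟩)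
          simp [EMetric.infEdist_zero_of_mem this]
        · calc EMetric.infEdist p (W u) ≤ EMetric.infEdist p C :=
                EMetric.infEdist_anti (hCW u)
            _ ≤ EMetric.diam (J n) := key n p hpJ
            _ ≤ D k := le_iSup₂ (f := fun n (_ : k < n) => EMetric.diam (J n)) n
                (lt_of_not_ge hk')
    · intro p hp
      rw [hW] at hp
      rcases hp with hp | hp
      · have : p ∈ W (z k u v) := hCW _ hp
        simp [EMetric.infEdist_zero_of_mem this]
      · obtain ⟨n, hn, hpJ⟩ := Set.mem_iUnion₂.mp hp
        by_cases hk' : n ≤ k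
        · have hun : z k u v n = true := by rw [hz]; simpa [hk'] using hn
          have : p ∈ W (z k u v) := by
            rw [hW]; exact Or.inr (Set.mem_iUnion₂.mpr ⟨n, hun, hpJ⟩)
          simp [EMetric.infEdist_zero_of_mem this]
        · calc EMetric.infEdist p (W (z k u v)) ≤ EMetric.infEdist p C :=
                EMetric.infEdist_anti (hCW _)
            _ ≤ EMetric.diam (J n) := key n p hpJ
            _ ≤ D k := le_iSup₂ (f := fun n (_ : k < n) => EMetric.diam (J n)) n
                (lt_of_not_ge hk')
  -- turn the edist bound into convergence of hausdorffDist
  have hconv : ∀ u v : ℕ → Bool,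
      Tendsto (fun k => Metric.hausdorffDist (W (z k u v)) (W u)) atTop (nhds 0) := by
    intro u v
    have hE : Tendsto (fun k => EMetric.hausdorffEdist (W (z k u v)) (W u)) atTop
        (nhds 0) :=
      tendsto_of_tendsto_of_tendsto_of_le_of_le tendsto_const_nhds hDtend
        (fun k => zero_le) (fun k => hmain u v k)
    have := (ENNReal.tendsto_toReal (a := 0) (by simp)).comp hE
    exact this
  -- tail equalities
  have hzeq : ∀ (u v : ℕ → Bool) (k : ℕ), h (z k u v) = h v := by
    intro u v k
    apply htail
    filter_upwards [eventually_gt_atTop k] with n hn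
    rw [hz]; simp [hn.not_ge]
  exact ⟨hconv x y, fun k => hzeq x y k, hconv y x, fun k => hzeq y x k⟩
end
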